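/- Let W₀ be the space of ordinals less than or equal to the first uncountable ordinal Ω, with the order topology, and let W = W₀ \ {Ω} with the subspace topology. Then the space C(W, W₀) equipped with the graph topology τ_Γ is not a regular topological space. -/

import Mathlib

open TopologicalSpace Set Ordinal

/-- The graph of a continuous map, as a subset of `X × Y`. -/
def graphSet {X Y : Type*} [TopologicalSpace X] [TopologicalSpace Y] (f : C(X, Y)) :
    Set (X × Y) := {p | p.2 = f p.1}

/-- The graph topology `τ_Γ` on `C(X, Y)`, generated by the sets
`F_G = {f | graph f ⊆ G}` for `G` open in `X × Y`. -/
def graphTopology (X Y : Type*) [TopologicalSpace X] [TopologicalSpace Y] :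
    TopologicalSpace C(X, Y) :=
  generateFrom {S | ∃ G : Set (X × Y), IsOpen G ∧ S = {f : C(X, Y) | graphSet f ⊆ G}}

/-- `W₀`: the ordinals less than or equal to the first uncountable ordinal `ω₁`,
with the (order) topology inherited from the order topology on `Ordinal`. -/
noncomputable abbrev W₀ : Type _ := ↥(Set.Iic (ω_ 1))

/-- `W = W₀ \ {Ω}`, with the subspace topology inherited from `W₀`. -/
noncomputable abbrev W : Type _ := {x : W₀ // x ≠ ⟨ω_ 1, Set.mem_Iic.mpr le_rfl⟩}

/-!
The inclusion `W → W₀` lies in the basic open set `F_G` with `G = {(x, y) | y ≠ Ω}`. If `F_H`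
is a basic neighbourhood of it, then around each countable `λ > 0` the open set `H` contains a
box `(d λ, λ]²`; as `ω₁` has uncountable cofinality, the regressive function `d` is bounded by a
single `a` on an unbounded set of `λ`, so `H` contains `(a + 1, λ)` for unboundedly many `λ`.
Redefining the inclusion at the isolated point `a + 1` to be `λ` keeps it in `F_H`, and these maps
accumulate at the inclusion redefined to be `Ω` at `a + 1`, which is not in `F_G`. So no closed
neighbourhood of the inclusion lies in `F_G`.
-/

open Filter Topology

section GraphTopology

variable {X Y Z : Type*} [TopologicalSpace X] [TopologicalSpace Y] [TopologicalSpace Z]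

lemma graphSet_subset_iff {f : C(X, Y)} {G : Set (X × Y)} :
    graphSet f ⊆ G ↔ ∀ x, (x, f x) ∈ G :=
  ⟨fun h x => h rfl, fun h ⟨x, _⟩ hy => by obtain rfl : _ = f x := hy; exact h x⟩

lemma isTopologicalBasis_graphTopology :
    @IsTopologicalBasis _ (graphTopology X Y)
      {S | ∃ G : Set (X × Y), IsOpen G ∧ S = {f | graphSet f ⊆ G}} := by
  let _ : TopologicalSpace C(X, Y) := graphTopology X Y
  refine ⟨?_, ?_, rfl⟩
  · rintro _ ⟨G₁, hG₁, rfl⟩ _ ⟨G₂, hG₂, rfl⟩ f hf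
    exact ⟨_, ⟨G₁ ∩ G₂, hG₁.inter hG₂, rfl⟩, subset_inter hf.1 hf.2,
      fun g hg => ⟨hg.trans inter_subset_left, hg.trans inter_subset_right⟩⟩
  · exact sUnion_eq_univ_iff.2 fun _ => ⟨_, ⟨univ, isOpen_univ, rfl⟩, subset_univ _⟩

open scoped Classical in
noncomputable def ContinuousMap.updateIsolated [T1Space X] (f : C(X, Y)) {x₀ : X}
    (hx₀ : IsOpen {x₀}) (c : Y) : C(X, Y) :=
  ⟨Function.update f x₀ c, by
    rw [← Set.piecewise_singleton x₀ (fun _ => c)]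
    exact continuous_const.piecewise
      (by simp [IsClopen.frontier_eq ⟨isClosed_singleton, hx₀⟩]) f.continuous⟩

lemma ContinuousMap.graphSet_updateIsolated_subset_iff [T1Space X] {f : C(X, Y)} {x₀ : X}
    {hx₀ : IsOpen {x₀}} {c : Y} {G : Set (X × Y)} :
    graphSet (f.updateIsolated hx₀ c) ⊆ G ↔ (x₀, c) ∈ G ∧ ∀ x ≠ x₀, (x, f x) ∈ G := by
  classical
  simp only [graphSet_subset_iff, updateIsolated, coe_mk]
  refine ⟨fun h => ⟨by simpa using h x₀, fun x hx => by simpa [hx] using h x⟩, fun h x => ?_⟩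
  by_cases hx : x = x₀
  · subst hx; simpa using h.1
  · simpa [hx] using h.2 x hx

lemma ContinuousMap.updateIsolated_mem_closure [T1Space X] {f : C(X, Y)} {H : Set (X × Y)}
    (hfH : graphSet f ⊆ H) {x₀ : X} (hx₀ : IsOpen {x₀}) {c : Y}
    (hc : c ∈ closure {y | (x₀, y) ∈ H}) :
    f.updateIsolated hx₀ c ∈ closure[graphTopology X Y] {g | graphSet g ⊆ H} := by
  let _ : TopologicalSpace C(X, Y) := graphTopology X Y
  rw [isTopologicalBasis_graphTopology.mem_closure_iff]
  rintro _ ⟨G, hG, rfl⟩ hcG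
  replace hcG := graphSet_updateIsolated_subset_iff.1 hcG
  obtain ⟨y, hyG, hyH⟩ :=
    mem_closure_iff.1 hc _ (hG.preimage (Continuous.prodMk_right x₀)) hcG.1
  rw [graphSet_subset_iff] at hfH
  exact ⟨f.updateIsolated hx₀ y, graphSet_updateIsolated_subset_iff.2 ⟨hyG, hcG.2⟩,
    graphSet_updateIsolated_subset_iff.2 ⟨hyH, fun x _ => hfH x⟩⟩

theorem not_regularSpace_graphTopology_of [T1Space X] {f : C(X, Y)} {G : Set (X × Y)}
    (hG : IsOpen G) (hfG : graphSet f ⊆ G)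
    (h : ∀ H : Set (X × Y), IsOpen H → graphSet f ⊆ H →
      ∃ x₀ : X, IsOpen {x₀} ∧ ∃ c ∈ closure {y | (x₀, y) ∈ H}, (x₀, c) ∉ G) :
    ¬ @RegularSpace C(X, Y) (graphTopology X Y) := by
  let _ : TopologicalSpace C(X, Y) := graphTopology X Y
  intro _
  obtain ⟨_, ⟨H, hH, rfl⟩, hfH, hHG⟩ := isTopologicalBasis_graphTopology.exists_closure_subset
    (isTopologicalBasis_graphTopology.isOpen ⟨G, hG, rfl⟩ |>.mem_nhds hfG)
  obtain ⟨x₀, hx₀, c, hc, hcG⟩ := h H hH hfH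
  exact hcG (ContinuousMap.graphSet_updateIsolated_subset_iff.1
    (hHG (ContinuousMap.updateIsolated_mem_closure hfH hx₀ hc))).1

lemma graphTopology_eq_induced_comp (e : Y ≃ₜ Z) :
    graphTopology X Y = (graphTopology X Z).induced ((e : C(Y, Z)).comp ·) := by
  rw [graphTopology, graphTopology, induced_generateFrom_eq]
  congr 1
  ext S
  simp only [mem_image, mem_ofPred_eq]
  constructor
  · rintro ⟨G, hG, rfl⟩
    refine ⟨_, ⟨Prod.map id e.symm ⁻¹' G, hG.preimage (by fun_prop), rfl⟩, ?_⟩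
    ext f
    simp [graphSet_subset_iff]
  · rintro ⟨_, ⟨G, hG, rfl⟩, rfl⟩
    refine ⟨Prod.map id e ⁻¹' G, hG.preimage (by fun_prop), ?_⟩
    ext f
    simp [graphSet_subset_iff]

lemma regularSpace_graphTopology_of_homeomorph (e : Y ≃ₜ Z)
    (h : @RegularSpace C(X, Z) (graphTopology X Z)) :
    @RegularSpace C(X, Y) (graphTopology X Y) :=
  let _ : TopologicalSpace C(X, Y) := graphTopology X Y
  let _ : TopologicalSpace C(X, Z) := graphTopology X Z
  (⟨graphTopology_eq_induced_comp e⟩ : IsInducing ((e : C(Y, Z)).comp ·)).regularSpace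

end GraphTopology

noncomputable def Ordinal.iicOrderIsoLift (a : Ordinal.{u}) : Iic a ≃o Iic (lift.{v} a) :=
  StrictMono.orderIsoOfSurjective (fun x => ⟨lift.{v} x.1, lift_le.2 x.2⟩)
    (fun _ _ h => lift_lt.2 h) fun y => by
      obtain ⟨x, hx⟩ := mem_range_lift_of_le y.2
      exact ⟨⟨x, lift_le.1 (hx ▸ y.2)⟩, Subtype.ext hx⟩

noncomputable def Ordinal.iicOrderIsoOfLiftEq {a : Ordinal.{u}} {b : Ordinal.{v}}
    (h : lift.{v} a = lift.{u} b) : Iic a ≃o Iic b :=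
  (iicOrderIsoLift a).trans <| (OrderIso.setCongr _ _ (by rw [h])).trans (iicOrderIsoLift b).symm

open Cardinal in
theorem Ordinal.exists_forall_exists_regressive_le {c : Ordinal} (hc : ℵ₀ < c.cof)
    (d : Ordinal → Ordinal) (hd : ∀ o, 0 < o → o < c → d o < o) :
    ∃ a < c, ∀ b < c, ∃ o, b < o ∧ o < c ∧ a < o ∧ d o ≤ a := by
  have hlim : Order.IsSuccLimit c := one_lt_cof_iff.1 (one_lt_aleph0.trans hc)
  by_contra! hcon
  choose! e he hed using hcon
  -- The supremum `L` of the iterates of `a ↦ max a (e a) + 1` lies beyond `e a` for every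
  -- iterate `a`, so `a < d L` for all of them, which forbids `d L < L`.
  set φ : Ordinal → Ordinal := fun a => max a (e a) + 1
  set L := nfp φ 0
  have hLc : L < c := nfp_lt_ord hc (fun a ha => hlim.add_one_lt (max_lt ha (he a ha))) hlim.bot_lt
  have hstep : ∀ n, max (φ^[n] 0) (e (φ^[n] 0)) < L := fun n => calc
    _ < φ (φ^[n] 0) := Order.lt_add_one_iff.2 le_rfl
    _ = φ^[n + 1] 0 := (Function.iterate_succ_apply' φ n 0).symm
    _ ≤ L := iterate_le_nfp φ 0 (n + 1)
  have hiter : ∀ n, φ^[n] 0 < L := fun n => (le_max_left _ _).trans_lt (hstep n)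
  obtain ⟨n, hn⟩ := lt_nfp_iff.1 (hd L (zero_le.trans_lt (hiter 0)) hLc)
  exact (hn.trans (hed _ ((hiter n).trans hLc) L ((le_max_right _ _).trans_lt (hstep n)) hLc
    (hiter n))).false

namespace W

def incl : C(W, W₀) := ⟨Subtype.val, continuous_subtype_val⟩

lemma isOpen_singleton {x : W} (hx : ¬ Order.IsSuccLimit x.1.1) : IsOpen {x} := by
  have : {x} = (fun y : W => y.1.1) ⁻¹' {x.1.1} := by
    ext y
    simp [Subtype.ext_iff]
  rw [this]
  exact (SuccOrder.isOpen_singleton_iff.2 hx).preimage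
    (continuous_subtype_val.comp continuous_subtype_val)

lemma exists_Ioc_box_subset {H : Set (W × W₀)} (hH : IsOpen H) (hincl : graphSet incl ⊆ H)
    {o : Ordinal} (ho₀ : 0 < o) (ho : o < ω_ 1) :
    ∃ d < o, ∀ (x : W) (y : W₀), x.1.1 ∈ Ioc d o → y.1 ∈ Ioc d o → (x, y) ∈ H := by
  have hind : IsInducing (Prod.map (fun x : W => x.1.1) (fun y : W₀ => y.1)) :=
    (IsInducing.subtypeVal.comp IsInducing.subtypeVal).prodMap IsInducing.subtypeVal
  let x : W := ⟨⟨o, ho.le⟩, ho.ne ∘ congrArg Subtype.val⟩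
  have hHx : H ∈ 𝓝 (x, x.1) := hH.mem_nhds (graphSet_subset_iff.1 hincl x)
  rw [hind.nhds_eq_comap, mem_comap] at hHx
  obtain ⟨T, hT, hTH⟩ := hHx
  obtain ⟨t₁, ht₁, t₂, ht₂, ht⟩ := mem_nhds_prod_iff.1 hT
  obtain ⟨d, hd, hdt⟩ := exists_Ioc_subset_of_mem_nhds (inter_mem ht₁ ht₂) ⟨0, ho₀⟩
  exact ⟨d, hd, fun x y hx hy => hTH (ht ⟨(hdt hx).1, (hdt hy).2⟩)⟩

lemma exists_isOpen_singleton_top_mem_closure {H : Set (W × W₀)} (hH : IsOpen H)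
    (hincl : graphSet incl ⊆ H) : ∃ x₀ : W, IsOpen {x₀} ∧ ⊤ ∈ closure {y | (x₀, y) ∈ H} := by
  choose! d hd hdH using
    fun o (ho₀ : 0 < o) (ho : o < ω_ 1) => exists_Ioc_box_subset hH hincl ho₀ ho
  obtain ⟨a, ha, hfreq⟩ := exists_forall_exists_regressive_le (by simp) d hd
  have hω₁ := Cardinal.isSuccLimit_omega 1
  have ha₁ : a + 1 < ω_ 1 := hω₁.add_one_lt ha
  refine ⟨⟨⟨a + 1, ha₁.le⟩, ha₁.ne ∘ congrArg Subtype.val⟩, isOpen_singleton (by simp), ?_⟩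
  refine mem_closure_iff_nhds.2 fun t ht => ?_
  obtain ⟨b, hb, hbt⟩ := exists_Ioc_subset_of_mem_nhds ht ⟨⊥, Subtype.coe_lt_coe.1 hω₁.bot_lt⟩
  obtain ⟨o, hbo, ho, hao, hdo⟩ := hfreq b.1 hb
  have ho₀ : 0 < o := zero_le.trans_lt hbo
  exact ⟨⟨o, ho.le⟩, hbt ⟨hbo, le_top⟩, hdH o ho₀ ho _ _
    ⟨hdo.trans_lt (Order.lt_add_one_iff.2 le_rfl), Order.add_one_le_of_lt hao⟩
    ⟨hd o ho₀ ho, le_rfl⟩⟩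

theorem not_regularSpace_graphTopology : ¬ @RegularSpace C(W.{u}, W₀.{u}) (graphTopology _ _) :=
  not_regularSpace_graphTopology_of (G := {p | p.2 ≠ ⊤})
    (isOpen_ne_fun continuous_snd continuous_const)
    (graphSet_subset_iff (f := incl).2 fun x => x.2)
    fun _ hH hincl =>
      let ⟨x₀, hx₀, htop⟩ := exists_isOpen_singleton_top_mem_closure hH hincl
      ⟨x₀, hx₀, ⊤, htop, fun h => h rfl⟩

end W

-- `W` and `W₀` in the statement carry independent universe parameters.
/-- `(C(W, W₀), τ_Γ)` is not a regular topological space. -/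
theorem not_regularSpace_graphTopology_W : ¬ @RegularSpace C(W, W₀) (graphTopology W W₀) :=
  fun h => W.not_regularSpace_graphTopology <|
    regularSpace_graphTopology_of_homeomorph (iicOrderIsoOfLiftEq (by simp)).toHomeomorph h
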